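/- arXiv:2508.20951 — 2 statements merged into one kernel-verified Lean document; each statement's English description precedes it below -/
import Mathlib

section
/- Let U ⊆ ℝ^N be an open set, δ > 0, and suppose U is δ-connected (i.e. U cannot be written as a disjoint union of two nonempty relatively open sets at distance at least δ). Let J : ℝ^N × ℝ^N → ℝ be measurable with J(x,y) ≥ C > 0 whenever |x−y| ≤ 2δ. If u ∈ L^p(U) with 1 < p < ∞ satisfies ∫_U ∫_U J(x,y) |u(x) − u(y)|^p dy dx = 0, then there exists a constant k ∈ ℝ such that u(x) = k for a.e. x ∈ U. -/
open MeasureTheory Filter Metric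

/-- An open set `U` is `δ`-connected if it cannot be written as a disjoint union of two
nonempty (relatively) open sets that are at distance at least `δ`. -/
def DeltaConnected {E : Type*} [MetricSpace E] (δ : ℝ) (U : Set E) : Prop :=
  ¬ ∃ U₁ U₂ : Set E, IsOpen U₁ ∧ IsOpen U₂ ∧ U₁.Nonempty ∧ U₂.Nonempty ∧
      Disjoint U₁ U₂ ∧ U = U₁ ∪ U₂ ∧ ∀ x ∈ U₁, ∀ y ∈ U₂, δ ≤ dist x y

/-- If `μ s ≠ 0` and `P` holds a.e., then `P` holds at some point of `s`. -/
lemma exists_mem_of_ae' {α : Type*} [MeasurableSpace α] {μ : Measure α} {s : Set α}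
    (hs : μ s ≠ 0) {P : α → Prop} (h : ∀ᵐ x ∂μ, P x) : ∃ x ∈ s, P x := by
  by_contra hc
  push_neg at hc
  rw [MeasureTheory.ae_iff] at h
  exact hs (measure_mono_null (fun x hx => hc x hx) h)

/-- Two positive-measure-a.e. constants coincide. -/
lemma ae_const_unique {α : Type*} [MeasurableSpace α] {μ : Measure α} {s : Set α}
    (hs : μ s ≠ 0) {g : α → ℝ} {c₁ c₂ : ℝ}
    (h₁ : ∀ᵐ x ∂μ, x ∈ s → g x = c₁) (h₂ : ∀ᵐ x ∂μ, x ∈ s → g x = c₂) : c₁ = c₂ := by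
  obtain ⟨x, hxs, hx₁, hx₂⟩ := exists_mem_of_ae' hs (h₁.and h₂)
  rw [← hx₁ hxs, hx₂ hxs]

/-- Key propagation lemma: if a.e. pairs of points of `U` within distance `2δ` have equal
`g`-values, and `s`, `t` are positive-measure subsets of `U` with all cross distances `≤ 2δ`,
then `g` is a.e. equal to a common constant on `s` and `t`. -/
lemma lemA {E : Type*} [MetricSpace E] [MeasurableSpace E] {μ₀ : Measure E} {U : Set E}
    {g : E → ℝ} {δ : ℝ}
    (h : ∀ᵐ x ∂(μ₀.restrict U), ∀ᵐ y ∂(μ₀.restrict U), dist x y ≤ 2 * δ → g x = g y)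
    {s t : Set E} (hs0 : (μ₀.restrict U) s ≠ 0) (ht0 : (μ₀.restrict U) t ≠ 0)
    (hst : ∀ x ∈ s, ∀ y ∈ t, dist x y ≤ 2 * δ) :
    ∃ c : ℝ, (∀ᵐ x ∂(μ₀.restrict U), x ∈ s → g x = c) ∧
      (∀ᵐ y ∂(μ₀.restrict U), y ∈ t → g y = c) := by
  obtain ⟨x₀, hx₀s, hx₀⟩ := exists_mem_of_ae' hs0 h
  refine ⟨g x₀, ?_, ?_⟩
  · -- first get the t-side, then transfer back
    have htside : ∀ᵐ y ∂(μ₀.restrict U), y ∈ t → g y = g x₀ := by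
      filter_upwards [hx₀] with y hy hyt
      exact (hy (hst x₀ hx₀s y hyt)).symm
    obtain ⟨y₀, hy₀t, hy₀c, hy₀⟩ := exists_mem_of_ae' ht0 (htside.and h)
    filter_upwards [hy₀] with x hx hxs
    have : dist y₀ x ≤ 2 * δ := by
      rw [dist_comm]; exact hst x hxs y₀ hy₀t
    rw [← hx this, hy₀c hy₀t]
  · filter_upwards [hx₀] with y hy hyt
    exact (hy (hst x₀ hx₀s y hyt)).symm

theorem stmt0 {N : ℕ} (U : Set (EuclideanSpace ℝ (Fin N))) (hU : IsOpen U)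
    (δ : ℝ) (hδ : 0 < δ) (hconn : DeltaConnected δ U)
    (J : EuclideanSpace ℝ (Fin N) → EuclideanSpace ℝ (Fin N) → ℝ)
    (hJmeas : Measurable (Function.uncurry J))
    (hJsym : ∀ x y, J x y = J y x)
    (C : ℝ) (hC : 0 < C)
    (hJ : ∀ x y, dist x y ≤ 2 * δ → C ≤ J x y)
    (p : ℝ) (hp : 1 < p)
    (u : EuclideanSpace ℝ (Fin N) → ℝ)
    (hu : MemLp u (ENNReal.ofReal p) (volume.restrict U))
    (hzero : ∫⁻ x in U, ∫⁻ y in U, ENNReal.ofReal (J x y * |u x - u y| ^ p) = 0) :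
    ∃ k : ℝ, ∀ᵐ x ∂(volume.restrict U), u x = k := by
  set μ : Measure (EuclideanSpace ℝ (Fin N)) := volume.restrict U with hμ
  rcases Set.eq_empty_or_nonempty U with hUe | ⟨a₀, ha₀⟩
  · exact ⟨0, by rw [hμ, hUe, Measure.restrict_empty]; simp⟩
  -- replace u by a measurable representative g
  obtain ⟨g, hgsm, hug⟩ := hu.1
  have hg : Measurable g := hgsm.measurable
  -- transfer hzero to g
  have hzero' : ∫⁻ x in U, ∫⁻ y in U, ENNReal.ofReal (J x y * |g x - g y| ^ p) = 0 := by
    rw [← hzero]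
    apply lintegral_congr_ae
    filter_upwards [hug] with x hx
    apply lintegral_congr_ae
    filter_upwards [hug] with y hy
    rw [hx, hy]
  -- measurability of the integrand
  have hFmeas : Measurable fun q : EuclideanSpace ℝ (Fin N) × EuclideanSpace ℝ (Fin N) =>
      ENNReal.ofReal (J q.1 q.2 * |g q.1 - g q.2| ^ p) := by
    apply ENNReal.measurable_ofReal.comp
    apply hJmeas.mul
    have : Measurable fun q : EuclideanSpace ℝ (Fin N) × EuclideanSpace ℝ (Fin N) =>
        |g q.1 - g q.2| := ((hg.comp measurable_fst).sub (hg.comp measurable_snd)).abs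
    fun_prop
  -- a.e. pairwise equality within distance 2δ
  have key : ∀ᵐ x ∂μ, ∀ᵐ y ∂μ, dist x y ≤ 2 * δ → g x = g y := by
    have houter : Measurable fun x => ∫⁻ y in U, ENNReal.ofReal (J x y * |g x - g y| ^ p) :=
      Measurable.lintegral_prod_right hFmeas
    have h1 : ∀ᵐ x ∂μ, ∫⁻ y in U, ENNReal.ofReal (J x y * |g x - g y| ^ p) = 0 :=
      (lintegral_eq_zero_iff houter).mp hzero'
    filter_upwards [h1] with x hx
    have hinner : Measurable fun y => ENNReal.ofReal (J x y * |g x - g y| ^ p) :=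
      hFmeas.comp measurable_prodMk_left
    have h2 : ∀ᵐ y ∂μ, ENNReal.ofReal (J x y * |g x - g y| ^ p) = 0 :=
      (lintegral_eq_zero_iff hinner).mp hx
    filter_upwards [h2] with y hy hdist
    rw [ENNReal.ofReal_eq_zero] at hy
    by_contra hne
    have h3 : 0 < |g x - g y| := abs_pos.mpr (sub_ne_zero.mpr hne)
    have h4 : 0 < |g x - g y| ^ p := Real.rpow_pos_of_pos h3 p
    have h5 : 0 < J x y := lt_of_lt_of_le hC (hJ x y hdist)
    nlinarith
  -- choose radii of good balls
  have hrex : ∀ a : EuclideanSpace ℝ (Fin N),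
      ∃ r : ℝ, 0 < r ∧ r ≤ δ / 2 ∧ (a ∈ U → ball a r ⊆ U) := by
    intro a
    by_cases ha : a ∈ U
    · obtain ⟨r, hr0, hrU⟩ := Metric.isOpen_iff.mp hU a ha
      exact ⟨min r (δ / 2), lt_min hr0 (by linarith), min_le_right _ _,
        fun _ => (ball_subset_ball (min_le_left _ _)).trans hrU⟩
    · exact ⟨δ / 2, by linarith, le_refl _, fun h => absurd h ha⟩
  choose r hr0 hrδ hrU using hrex
  -- balls have positive μ-measure
  have hμball : ∀ a : EuclideanSpace ℝ (Fin N), a ∈ U → μ (ball a (r a)) ≠ 0 := by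
    intro a ha
    rw [hμ, Measure.restrict_apply' hU.measurableSet,
      Set.inter_eq_left.mpr (hrU a ha)]
    exact (measure_ball_pos volume a (hr0 a)).ne'
  -- the local constant
  have hfex : ∀ a : EuclideanSpace ℝ (Fin N),
      ∃ c : ℝ, a ∈ U → ∀ᵐ x ∂μ, x ∈ ball a (r a) → g x = c := by
    intro a
    by_cases ha : a ∈ U
    · obtain ⟨c, hc, -⟩ := lemA key (hμball a ha) (hμball a ha)
        (fun x hx y hy => by
          have t1 := dist_triangle x a y
          have h1 : dist a x < r a := mem_ball'.mp hx
          have h2 : dist a y < r a := mem_ball'.mp hy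
          have h3 := hrδ a
          rw [dist_comm x a] at t1
          linarith)
      exact ⟨c, fun _ => hc⟩
    · exact ⟨0, fun h => absurd h ha⟩
  choose f hf using hfex
  -- f is "δ-locally constant" on U
  have hstep : ∀ a ∈ U, ∀ b ∈ U, dist a b < δ → f a = f b := by
    intro a ha b hb hab
    obtain ⟨c, hca, hcb⟩ := lemA key (hμball a ha) (hμball b hb)
      (fun x hx y hy => by
        have t1 := dist_triangle4 x a b y
        have h1 : dist a x < r a := mem_ball'.mp hx
        have h2 : dist b y < r b := mem_ball'.mp hy
        have h3 := hrδ a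
        have h4 := hrδ b
        rw [dist_comm x a] at t1
        linarith)
    rw [ae_const_unique (hμball a ha) (hf a ha) hca,
      ae_const_unique (hμball b hb) (hf b hb) hcb]
  -- by δ-connectedness, f is constant on U
  have hconst : ∀ a ∈ U, f a = f a₀ := by
    by_contra hc
    push_neg at hc
    obtain ⟨b₀, hb₀, hb₀ne⟩ := hc
    refine hconn ⟨{x ∈ U | f x = f a₀}, {x ∈ U | f x ≠ f a₀}, ?_, ?_,
      ⟨a₀, ha₀, rfl⟩, ⟨b₀, hb₀, hb₀ne⟩, ?_, ?_, ?_⟩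
    · rw [Metric.isOpen_iff]
      rintro x ⟨hxU, hxf⟩
      refine ⟨r x, hr0 x, fun y hy => ?_⟩
      have hyU : y ∈ U := hrU x hxU hy
      have hxy : dist x y < δ := by
        have h1 : dist x y < r x := mem_ball'.mp hy
        have := hrδ x
        linarith
      exact ⟨hyU, (hstep x hxU y hyU hxy).symm.trans hxf⟩
    · rw [Metric.isOpen_iff]
      rintro x ⟨hxU, hxf⟩
      refine ⟨r x, hr0 x, fun y hy => ?_⟩
      have hyU : y ∈ U := hrU x hxU hy
      have hxy : dist x y < δ := by
        have h1 : dist x y < r x := mem_ball'.mp hy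
        have := hrδ x
        linarith
      exact ⟨hyU, fun h => hxf ((hstep x hxU y hyU hxy).trans h)⟩
    · rw [Set.disjoint_iff]
      rintro x ⟨⟨-, h1⟩, ⟨-, h2⟩⟩
      exact h2 h1
    · ext x
      constructor
      · intro hx
        by_cases h : f x = f a₀
        · exact Or.inl ⟨hx, h⟩
        · exact Or.inr ⟨hx, h⟩
      · rintro (⟨hx, -⟩ | ⟨hx, -⟩) <;> exact hx
    · rintro x ⟨hxU, hx1⟩ y ⟨hyU, hy2⟩
      by_contra hlt
      push_neg at hlt
      exact hy2 ((hstep x hxU y hyU hlt).symm.trans hx1)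
  -- countable cover of U by the balls
  obtain ⟨T, hTU, hTc, hTcov⟩ := TopologicalSpace.countable_cover_nhdsWithin
    (f := fun a => ball a (r a)) (s := U)
    (fun a _ => mem_nhdsWithin_of_mem_nhds (ball_mem_nhds a (hr0 a)))
  -- conclude
  refine ⟨f a₀, ?_⟩
  have hball_ae : ∀ᵐ x ∂μ, ∀ a ∈ T, x ∈ ball a (r a) → g x = f a₀ := by
    rw [MeasureTheory.ae_ball_iff hTc]
    intro a haT
    filter_upwards [hf a (hTU haT)] with x hx hxb
    rw [hx hxb, hconst a (hTU haT)]
  filter_upwards [hball_ae, hug, ae_restrict_mem hU.measurableSet] with x hx hxg hxU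
  obtain ⟨a, haT, hab⟩ := by simpa using hTcov hxU
  rw [hxg]
  exact hx a haT hab
end

section
/- Let 1 < p < ∞ and let M be the nonnegative integer with M + 1 < p ≤ M + 2. Then for all real numbers a, b: (|a|^{p−M−2} a − |b|^{p−M−2} b)(a − b) ≥ 0 and (a − b)·(|a| − |b|) ≤ |a − b|², hence |a − b|^p ≥ C_p (|a|^{p−M−2} a − |b|^{p−M−2} b)(a − b)(|a| − |b|)^M when M is even, for some constant C_p > 0 depending only on p. -/
open scoped NNReal

lemma odd_pow_eq_nonneg (s t : ℝ) (hs : s ≠ 0) (ht : 0 ≤ t) :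
    |t| ^ (s - 1) * t = t ^ s := by
  rcases ht.eq_or_lt with h | h
  · simp [← h, Real.zero_rpow hs]
  · rw [abs_of_pos h, ← Real.rpow_add_one h.ne', sub_add_cancel]

lemma odd_pow_eq_nonpos (s t : ℝ) (hs : s ≠ 0) (ht : t ≤ 0) :
    |t| ^ (s - 1) * t = -((-t) ^ s) := by
  have h := odd_pow_eq_nonneg s (-t) hs (by linarith)
  rw [abs_neg] at h
  linarith

lemma odd_pow_mono (s : ℝ) (hs : 0 < s) :
    Monotone (fun t : ℝ => |t| ^ (s - 1) * t) := by
  intro b a hba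
  simp only
  rcases le_or_gt 0 b with hb | hb
  · rw [odd_pow_eq_nonneg s b hs.ne' hb, odd_pow_eq_nonneg s a hs.ne' (hb.trans hba)]
    exact Real.rpow_le_rpow hb hba hs.le
  · rcases le_or_gt 0 a with ha | ha
    · have h1 : |b| ^ (s - 1) * b ≤ 0 :=
        mul_nonpos_of_nonneg_of_nonpos (Real.rpow_nonneg (abs_nonneg b) _) hb.le
      have h2 : 0 ≤ |a| ^ (s - 1) * a :=
        mul_nonneg (Real.rpow_nonneg (abs_nonneg a) _) ha
      linarith
    · rw [odd_pow_eq_nonpos s b hs.ne' hb.le, odd_pow_eq_nonpos s a hs.ne' ha.le,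
        neg_le_neg_iff]
      exact Real.rpow_le_rpow (by linarith) (by linarith) hs.le

lemma rpow_subadd (q x y : ℝ) (hx : 0 ≤ x) (hy : 0 ≤ y) (hq0 : 0 ≤ q) (hq1 : q ≤ 1) :
    (x + y) ^ q ≤ x ^ q + y ^ q := by
  lift x to ℝ≥0 using hx
  lift y to ℝ≥0 using hy
  exact_mod_cast NNReal.rpow_add_le_add_rpow x y hq0 hq1

lemma odd_pow_holder (s : ℝ) (hs0 : 0 < s) (hs1 : s ≤ 1) (a b : ℝ) (hba : b ≤ a) :
    |a| ^ (s - 1) * a - |b| ^ (s - 1) * b ≤ 2 * |a - b| ^ s := by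
  have hab : |a - b| = a - b := abs_of_nonneg (by linarith)
  rcases le_or_gt 0 b with hb | hb
  · rw [odd_pow_eq_nonneg s b hs0.ne' hb, odd_pow_eq_nonneg s a hs0.ne' (hb.trans hba), hab]
    have := rpow_subadd s b (a - b) hb (by linarith) hs0.le hs1
    have h2 : 0 ≤ (a - b) ^ s := Real.rpow_nonneg (by linarith) _
    rw [show b + (a - b) = a by ring] at this
    linarith
  · rcases le_or_gt 0 a with ha | ha
    · rw [odd_pow_eq_nonneg s a hs0.ne' ha, odd_pow_eq_nonpos s b hs0.ne' hb.le, hab]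
      have h1 : a ^ s ≤ (a - b) ^ s := Real.rpow_le_rpow ha (by linarith) hs0.le
      have h2 : (-b) ^ s ≤ (a - b) ^ s := Real.rpow_le_rpow (by linarith) (by linarith) hs0.le
      linarith
    · rw [odd_pow_eq_nonpos s b hs0.ne' hb.le, odd_pow_eq_nonpos s a hs0.ne' ha.le, hab]
      have := rpow_subadd s (-a) (a - b) (by linarith) (by linarith) hs0.le hs1
      rw [show -a + (a - b) = -b by ring] at this
      have h2 : 0 ≤ (a - b) ^ s := Real.rpow_nonneg (by linarith) _
      linarith

theorem stmt1 (p : ℝ) (M : ℕ) (h1 : (M : ℝ) + 1 < p) (h2 : p ≤ (M : ℝ) + 2) :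
    (∀ a b : ℝ,
      0 ≤ (|a| ^ (p - (M : ℝ) - 2) * a - |b| ^ (p - (M : ℝ) - 2) * b) * (a - b)) ∧
    (∀ a b : ℝ, (a - b) * (|a| - |b|) ≤ |a - b| ^ 2) ∧
    (Even M → ∃ C : ℝ, 0 < C ∧ ∀ a b : ℝ,
      C * ((|a| ^ (p - (M : ℝ) - 2) * a - |b| ^ (p - (M : ℝ) - 2) * b) * (a - b) *
        (|a| - |b|) ^ M) ≤ |a - b| ^ p) := by
  set s : ℝ := p - (M : ℝ) - 1 with hs_def
  have hs0 : 0 < s := by simp only [hs_def]; linarith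
  have hs1 : s ≤ 1 := by simp only [hs_def]; linarith
  have hexp : p - (M : ℝ) - 2 = s - 1 := by simp only [hs_def]; ring
  rw [hexp]
  have mono := odd_pow_mono s hs0
  have key1 : ∀ a b : ℝ,
      0 ≤ (|a| ^ (s - 1) * a - |b| ^ (s - 1) * b) * (a - b) := by
    intro a b
    rcases le_total b a with h | h
    · exact mul_nonneg (by simpa using sub_nonneg.mpr (mono h)) (by linarith)
    · have hx : (|a| ^ (s - 1) * a - |b| ^ (s - 1) * b) ≤ 0 := by
        simpa using sub_nonpos.mpr (mono h)
      nlinarith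
  refine ⟨key1, ?_, ?_⟩
  · intro a b
    calc (a - b) * (|a| - |b|) ≤ |(a - b) * (|a| - |b|)| := le_abs_self _
    _ = |a - b| * abs (|a| - |b|) := abs_mul _ _
    _ ≤ |a - b| * |a - b| :=
        mul_le_mul_of_nonneg_left (abs_abs_sub_abs_le_abs_sub a b) (abs_nonneg _)
    _ = |a - b| ^ 2 := (sq (|a - b|)).symm
  · intro hM
    refine ⟨1/2, by norm_num, fun a b => ?_⟩
    have hXY : (|a| ^ (s - 1) * a - |b| ^ (s - 1) * b) * (a - b) ≤ 2 * |a - b| ^ s * |a - b| := by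
      rcases le_total b a with h | h
      · have h1 := odd_pow_holder s hs0 hs1 a b h
        have hab : a - b = |a - b| := (abs_of_nonneg (by linarith)).symm
        nth_rw 1 [hab]
        exact mul_le_mul_of_nonneg_right (by simpa using h1) (abs_nonneg _)
      · have h1 := odd_pow_holder s hs0 hs1 b a h
        rw [abs_sub_comm b a] at h1
        have hab : b - a = |a - b| := by rw [abs_sub_comm]; exact (abs_of_nonneg (by linarith)).symm
        have hre : (|a| ^ (s - 1) * a - |b| ^ (s - 1) * b) * (a - b)
            = (|b| ^ (s - 1) * b - |a| ^ (s - 1) * a) * (b - a) := by ring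
        rw [hre, hab]
        exact mul_le_mul_of_nonneg_right (by simpa using h1) (abs_nonneg _)
    have hZ : (|a| - |b|) ^ M ≤ |a - b| ^ M := by
      calc (|a| - |b|) ^ M = abs (|a| - |b|) ^ M := (hM.pow_abs _).symm
      _ ≤ |a - b| ^ M := pow_le_pow_left₀ (abs_nonneg _) (abs_abs_sub_abs_le_abs_sub a b) M
    have hZ0 : 0 ≤ (|a| - |b|) ^ M := hM.pow_nonneg _
    have hfinal : (|a| ^ (s - 1) * a - |b| ^ (s - 1) * b) * (a - b) * (|a| - |b|) ^ M
        ≤ 2 * |a - b| ^ s * |a - b| * |a - b| ^ M :=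
      mul_le_mul hXY hZ hZ0 (by positivity)
    have hcollapse : 2 * |a - b| ^ s * |a - b| * |a - b| ^ M = 2 * |a - b| ^ p := by
      rw [show (2:ℝ) * |a - b| ^ p = 2 * |a - b| ^ (s + (1 + (M:ℝ))) by
        congr 2; simp only [hs_def]; ring]
      rw [Real.rpow_add' (abs_nonneg _) (by positivity),
        Real.rpow_add' (abs_nonneg _) (by positivity),
        Real.rpow_one, Real.rpow_natCast]
      ring
    rw [hcollapse] at hfinal
    linarith
end
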